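/- arXiv:2207.09536 — 4 statements merged into one kernel-verified Lean document; each statement's English description precedes it below -/
import Mathlib

section
/- Consider the linearized closed-loop wind-turbine/grid model: assume κ ≥ 0 and the gain-ratio condition K_d^gsc / K_θ^gsc = K_d^msc / K_θ^msc. Then the origin of the system is asymptotically stable; in particular, every solution x : [0,∞) → ℝ⁶ of the system satisfies x(t) → 0 as t → ∞, and for every ε > 0 there exists δ > 0 such that ‖x(0)‖ < δ implies ‖x(t)‖ < ε for all t ≥ 0. -/
/-!
The stored energy of the closed loop (the first six terms of `lyapunov`) is a positive definite
quadratic form whose derivative along solutions is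
`-(bg ρ₁ + bmsc ρ₂)² / C_dc - κ ω₂² / K_d^msc - P² / (K_d^gsc k_g) ≤ 0`; the gain-ratio condition
is exactly what makes the DC-voltage coupling terms cancel. This only gives Lyapunov stability.
The cross terms `η⁴ P ω₁ - η⁶ ρ₁ ω₁ - η⁶ v ρ₁ + η⁸ ρ₂ ω₂` have derivatives containing `-ω₁²`,
`-ρ₁²`, `-v²` and `-ω₂²`. Every indefinite term they create is of order `η^k` with `2k` larger
than the sum of the orders of the diagonal terms of the two variables it couples, so Young's
inequality absorbs it once `η` is small. Then `η ‖x‖² ≤ V ≤ ‖x‖² / η` and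
`V' ≤ -η⁹ ‖x‖² ≤ -η¹⁰ V`, and Grönwall's inequality gives exponential decay.
-/

open Filter Topology

/-- A solution of the linearized closed-loop wind-turbine/grid model with state
`x = (ρ₁, ρ₂, ω₁, ω₂, v, P)` (indices `0,…,5`). -/
def IsSolution (Kdg Kdm Kθg Kθm bg bmsc Jg Jwt ω0 ωdel Cdc Tg kg κ : ℝ)
    (x : ℝ → EuclideanSpace ℝ (Fin 6)) : Prop :=
  ∀ t : ℝ, 0 ≤ t →
    HasDerivAt (fun s => x s 0)
      (-(Kdg / Cdc) * (bg * x t 0 + bmsc * x t 1) - x t 2 + Kθg * x t 4) t ∧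
    HasDerivAt (fun s => x s 1)
      (-(Kdm / Cdc) * (bg * x t 0 + bmsc * x t 1) - x t 3 + Kθm * x t 4) t ∧
    HasDerivAt (fun s => x s 2) ((bg * x t 0 + x t 5) / (Jg * ω0)) t ∧
    HasDerivAt (fun s => x s 3) ((bmsc * x t 1 - κ * x t 3) / (Jwt * ωdel)) t ∧
    HasDerivAt (fun s => x s 4) (-(bg * x t 0 + bmsc * x t 1) / Cdc) t ∧
    HasDerivAt (fun s => x s 5) ((-kg * x t 2 - x t 5) / Tg) t

open Real

theorem mul_mul_le_add_of_sq_le {c p q : ℝ} (hp : 0 < p) (h : c ^ 2 ≤ 4 * p * q) (u w : ℝ) :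
    c * (u * w) ≤ p * u ^ 2 + q * w ^ 2 := by
  nlinarith [sq_nonneg (c * w - 2 * p * u), sq_nonneg w]

theorem eventually_mul_pow_le_mul_pow (c : ℝ) {d : ℝ} (hd : 0 < d) {m n : ℕ} (hmn : m < n) :
    ∀ᶠ η in 𝓝[>] (0 : ℝ), c * η ^ n ≤ d * η ^ m := by
  have hlim : Tendsto (fun η : ℝ => c * η ^ (n - m)) (𝓝[>] 0) (𝓝 0) := by
    have hcont : Continuous fun η : ℝ => c * η ^ (n - m) := by fun_prop
    simpa [zero_pow (Nat.sub_ne_zero_of_lt hmn)] using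
      (hcont.tendsto 0).mono_left nhdsWithin_le_nhds
  filter_upwards [hlim.eventually (gt_mem_nhds hd), self_mem_nhdsWithin]
    with η hη (hη₀ : 0 < η)
  calc c * η ^ n = c * η ^ (n - m) * η ^ m := by
        rw [mul_assoc, ← pow_add, Nat.sub_add_cancel hmn.le]
    _ ≤ d * η ^ m := mul_le_mul_of_nonneg_right hη.le (by positivity)

theorem eventually_mul_pow_mul_sq_le (a : ℝ) {p : ℝ} (hp : 0 < p) {i k : ℕ} (h : i < k) :
    ∀ᶠ η in 𝓝[>] (0 : ℝ), ∀ u : ℝ, a * η ^ k * u ^ 2 ≤ p * η ^ i * u ^ 2 :=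
  (eventually_mul_pow_le_mul_pow a hp h).mono fun _ hη u =>
    mul_le_mul_of_nonneg_right hη (sq_nonneg u)

theorem eventually_mul_pow_mul_mul_le_add (a : ℝ) {p q : ℝ} (hp : 0 < p) (hq : 0 < q)
    {i j k : ℕ} (h : i + j < 2 * k) :
    ∀ᶠ η in 𝓝[>] (0 : ℝ), ∀ u w : ℝ,
      a * η ^ k * (u * w) ≤ p * η ^ i * u ^ 2 + q * η ^ j * w ^ 2 := by
  filter_upwards [eventually_mul_pow_le_mul_pow (a ^ 2) (by positivity : 0 < 4 * p * q) h,
    self_mem_nhdsWithin] with η hη (hη₀ : 0 < η)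
  exact mul_mul_le_add_of_sq_le (by positivity) (by convert hη using 1 <;> ring)

theorem eventually_pow_mul_sq_le_add {b₁ b₂ p q : ℝ} (hb₂ : b₂ ≠ 0) (hp : 0 < p) (hq : 0 < q)
    {i j n : ℕ} (hi : i < n) (hj : j < n) :
    ∀ᶠ η in 𝓝[>] (0 : ℝ), ∀ u w : ℝ,
      η ^ n * w ^ 2 ≤ p * η ^ i * (b₁ * u + b₂ * w) ^ 2 + q * η ^ j * u ^ 2 := by
  filter_upwards [eventually_mul_pow_mul_sq_le (2 / b₂ ^ 2) hp hi,
    eventually_mul_pow_mul_sq_le (2 * b₁ ^ 2 / b₂ ^ 2) hq hj, self_mem_nhdsWithin]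
    with η hs hu (hη₀ : 0 < η) u w
  have hw : w ^ 2 ≤ 2 / b₂ ^ 2 * (b₁ * u + b₂ * w) ^ 2 + 2 * b₁ ^ 2 / b₂ ^ 2 * u ^ 2 := by
    calc w ^ 2 = (b₂ * w) ^ 2 / b₂ ^ 2 := by field_simp
      _ ≤ (2 * (b₁ * u + b₂ * w) ^ 2 + 2 * (b₁ * u) ^ 2) / b₂ ^ 2 := by
        gcongr; nlinarith [sq_nonneg (b₁ * u + b₂ * w + b₁ * u)]
      _ = _ := by ring
  linarith [hs (b₁ * u + b₂ * w), hu u, mul_le_mul_of_nonneg_left hw (pow_nonneg hη₀.le n)]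

theorem le_mul_exp_of_hasDerivAt_le {f f' : ℝ → ℝ} {c t : ℝ}
    (hf : ∀ s, 0 ≤ s → HasDerivAt f (f' s) s) (hf' : ∀ s, 0 ≤ s → f' s ≤ -c * f s)
    (ht : 0 ≤ t) : f t ≤ f 0 * exp (-c * t) := by
  have := le_gronwallBound_of_liminf_deriv_right_le (K := -c) (ε := 0)
    (fun s hs => (hf s hs.1).continuousAt.continuousWithinAt)
    (fun s hs _ hr => (hf s hs.1).hasDerivWithinAt.liminf_right_slope_le hr)
    le_rfl (fun s hs => by simpa using hf' s hs.1) t ⟨ht, le_rfl⟩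
  simpa [gronwallBound_ε0] using this

theorem norm_sq_eq_sum_sq_fin_six (y : EuclideanSpace ℝ (Fin 6)) :
    ‖y‖ ^ 2 = y 0 ^ 2 + y 1 ^ 2 + y 2 ^ 2 + y 3 ^ 2 + y 4 ^ 2 + y 5 ^ 2 := by
  simp [EuclideanSpace.norm_sq_eq, Fin.sum_univ_six]

section ExponentialBound

variable {E : Type*} [NormedAddCommGroup E]

theorem tendsto_zero_of_mul_sq_norm_le {x : ℝ → E} {a c : ℝ} (ha : 0 < a) (hc : 0 < c)
    (h : ∀ t, 0 ≤ t → a * ‖x t‖ ^ 2 ≤ ‖x 0‖ ^ 2 * exp (-(c * t))) :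
    Tendsto x atTop (𝓝 0) := by
  have hexp : Tendsto (fun t => ‖x 0‖ ^ 2 / a * exp (-(c * t))) atTop (𝓝 0) := by
    simpa using (tendsto_exp_neg_atTop_nhds_zero.comp
      (tendsto_id.const_mul_atTop hc)).const_mul (‖x 0‖ ^ 2 / a)
  have hsq : Tendsto (fun t => ‖x t‖ ^ 2) atTop (𝓝 0) :=
    squeeze_zero' (Eventually.of_forall fun t => by positivity)
      ((eventually_ge_atTop 0).mono fun t ht => by
        rw [div_mul_eq_mul_div, le_div_iff₀ ha]; linarith [h t ht]) hexp
  rw [tendsto_zero_iff_norm_tendsto_zero]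
  simpa [sqrt_sq (norm_nonneg _)] using hsq.sqrt

theorem exists_forall_norm_lt_of_mul_sq_norm_le (P : (ℝ → E) → Prop) {a c : ℝ} (ha : 0 < a)
    (hc : 0 ≤ c) (h : ∀ x, P x → ∀ t, 0 ≤ t → a * ‖x t‖ ^ 2 ≤ ‖x 0‖ ^ 2 * exp (-(c * t)))
    {ε : ℝ} (hε : 0 < ε) :
    ∃ δ, 0 < δ ∧ ∀ x, P x → ‖x 0‖ < δ → ∀ t, 0 ≤ t → ‖x t‖ < ε := by
  refine ⟨√a * ε, by positivity, fun x hx hx₀ t ht => ?_⟩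
  have hexp : exp (-(c * t)) ≤ 1 := exp_le_one_iff.mpr (neg_nonpos.mpr (mul_nonneg hc ht))
  have : a * ‖x t‖ ^ 2 < a * ε ^ 2 :=
    calc a * ‖x t‖ ^ 2 ≤ ‖x 0‖ ^ 2 * exp (-(c * t)) := h x hx t ht
      _ ≤ ‖x 0‖ ^ 2 := mul_le_of_le_one_right (by positivity) hexp
      _ < (√a * ε) ^ 2 := by gcongr
      _ = a * ε ^ 2 := by rw [mul_pow, sq_sqrt ha.le]
  exact lt_of_pow_lt_pow_left₀ 2 hε.le (lt_of_mul_lt_mul_left this ha.le)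

end ExponentialBound

section WindTurbineGrid

variable (bg bmsc M₁ M₂ Cdc Tg kg Kθg Kθm Kdg Kdm κ : ℝ)

noncomputable def lyapunov (η : ℝ) (y : EuclideanSpace ℝ (Fin 6)) : ℝ :=
  bg / (2 * Kdg) * y 0 ^ 2 + bmsc / (2 * Kdm) * y 1 ^ 2 + M₁ / (2 * Kdg) * y 2 ^ 2
    + M₂ / (2 * Kdm) * y 3 ^ 2 + Kθg * Cdc / (2 * Kdg) * y 4 ^ 2
    + Tg / (2 * Kdg * kg) * y 5 ^ 2
    + η ^ 4 * (y 5 * y 2) - η ^ 6 * (y 0 * y 2) - η ^ 6 * (y 4 * y 0) + η ^ 8 * (y 1 * y 3)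

noncomputable def dissipation (η : ℝ) (y : EuclideanSpace ℝ (Fin 6)) : ℝ :=
  1 / Cdc * (bg * y 0 + bmsc * y 1) ^ 2 + κ / Kdm * y 3 ^ 2 + 1 / (Kdg * kg) * y 5 ^ 2
    + η ^ 4 * (kg / Tg * y 2 ^ 2 + 1 / Tg * (y 2 * y 5) - bg / M₁ * (y 0 * y 5)
      - 1 / M₁ * y 5 ^ 2)
    + η ^ 6 * (bg / M₁ * y 0 ^ 2 + 1 / M₁ * (y 0 * y 5)
      - Kdg / Cdc * (y 2 * (bg * y 0 + bmsc * y 1)) - y 2 ^ 2 + Kθg * (y 4 * y 2))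
    + η ^ 6 * (Kθg * y 4 ^ 2 - 1 / Cdc * (y 0 * (bg * y 0 + bmsc * y 1))
      - Kdg / Cdc * (y 4 * (bg * y 0 + bmsc * y 1)) - y 4 * y 2)
    + η ^ 8 * (y 3 ^ 2 + Kdm / Cdc * (y 3 * (bg * y 0 + bmsc * y 1)) - Kθm * (y 3 * y 4)
      - bmsc / M₂ * y 1 ^ 2 + κ / M₂ * (y 3 * y 1))

theorem hasDerivAt_lyapunov {Jg Jwt ω0 ωdel : ℝ} (hKdg : Kdg ≠ 0) (hKdm : Kdm ≠ 0)
    (hCdc : Cdc ≠ 0) (hTg : Tg ≠ 0) (hkg : kg ≠ 0) (hJg : Jg ≠ 0) (hω0 : ω0 ≠ 0)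
    (hJwt : Jwt ≠ 0) (hωdel : ωdel ≠ 0) (hratio : Kdg * Kθm = Kdm * Kθg)
    {x : ℝ → EuclideanSpace ℝ (Fin 6)}
    (hx : IsSolution Kdg Kdm Kθg Kθm bg bmsc Jg Jwt ω0 ωdel Cdc Tg kg κ x) (η : ℝ) {t : ℝ}
    (ht : 0 ≤ t) :
    HasDerivAt (fun s => lyapunov bg bmsc (Jg * ω0) (Jwt * ωdel) Cdc Tg kg Kθg Kdg Kdm η (x s))
      (-dissipation bg bmsc (Jg * ω0) (Jwt * ωdel) Cdc Tg kg Kθg Kθm Kdg Kdm κ η (x t)) t := by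
  obtain ⟨h₀, h₁, h₂, h₃, h₄, h₅⟩ := hx t ht
  obtain rfl : Kθm = Kdm * Kθg / Kdg := by field_simp; linarith
  have hV := ((((((((((h₀.pow 2).const_mul (bg / (2 * Kdg))).add
    ((h₁.pow 2).const_mul (bmsc / (2 * Kdm)))).add
    ((h₂.pow 2).const_mul (Jg * ω0 / (2 * Kdg)))).add
    ((h₃.pow 2).const_mul (Jwt * ωdel / (2 * Kdm)))).add
    ((h₄.pow 2).const_mul (Kθg * Cdc / (2 * Kdg)))).add
    ((h₅.pow 2).const_mul (Tg / (2 * Kdg * kg)))).add ((h₅.mul h₂).const_mul (η ^ 4))).sub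
    ((h₀.mul h₂).const_mul (η ^ 6))).sub ((h₄.mul h₀).const_mul (η ^ 6))).add
    ((h₁.mul h₃).const_mul (η ^ 8))
  refine hV.congr_deriv ?_
  simp only [dissipation, Nat.cast_ofNat]
  field_simp
  ring

theorem eventually_mul_lyapunov_le_norm_sq :
    ∀ᶠ η in 𝓝[>] (0 : ℝ), ∀ y,
      η * lyapunov bg bmsc M₁ M₂ Cdc Tg kg Kθg Kdg Kdm η y ≤ ‖y‖ ^ 2 := by
  have h : (0 : ℝ) < 1 / 4 := by norm_num
  filter_upwards [eventually_mul_pow_mul_sq_le (bg / (2 * Kdg)) h zero_lt_one,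
    eventually_mul_pow_mul_sq_le (bmsc / (2 * Kdm)) h zero_lt_one,
    eventually_mul_pow_mul_sq_le (M₁ / (2 * Kdg)) h zero_lt_one,
    eventually_mul_pow_mul_sq_le (M₂ / (2 * Kdm)) h zero_lt_one,
    eventually_mul_pow_mul_sq_le (Kθg * Cdc / (2 * Kdg)) h zero_lt_one,
    eventually_mul_pow_mul_sq_le (Tg / (2 * Kdg * kg)) h zero_lt_one,
    eventually_mul_pow_mul_mul_le_add 1 h h (by norm_num : 0 + 0 < 2 * 5),
    eventually_mul_pow_mul_mul_le_add (-1) h h (by norm_num : 0 + 0 < 2 * 7),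
    eventually_mul_pow_mul_mul_le_add 1 h h (by norm_num : 0 + 0 < 2 * 9)]
    with η h₀ h₁ h₂ h₃ h₄ h₅ c₄ c₆ c₈ y
  rw [norm_sq_eq_sum_sq_fin_six]
  simp only [lyapunov]
  linarith [h₀ (y 0), h₁ (y 1), h₂ (y 2), h₃ (y 3), h₄ (y 4), h₅ (y 5), c₄ (y 5) (y 2),
    c₆ (y 0) (y 2), c₆ (y 4) (y 0), c₈ (y 1) (y 3), sq_nonneg (y 0), sq_nonneg (y 1),
    sq_nonneg (y 2), sq_nonneg (y 3), sq_nonneg (y 4), sq_nonneg (y 5)]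

theorem eventually_mul_norm_sq_le_lyapunov (hbg : 0 < bg) (hbmsc : 0 < bmsc) (hM₁ : 0 < M₁)
    (hM₂ : 0 < M₂) (hCdc : 0 < Cdc) (hTg : 0 < Tg) (hkg : 0 < kg) (hKθg : 0 < Kθg)
    (hKdg : 0 < Kdg) (hKdm : 0 < Kdm) :
    ∀ᶠ η in 𝓝[>] (0 : ℝ), ∀ y,
      η * ‖y‖ ^ 2 ≤ lyapunov bg bmsc M₁ M₂ Cdc Tg kg Kθg Kdg Kdm η y := by
  have hρ₁ : 0 < bg / (2 * Kdg) / 4 := by positivity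
  have hρ₂ : 0 < bmsc / (2 * Kdm) / 4 := by positivity
  have hω₁ : 0 < M₁ / (2 * Kdg) / 4 := by positivity
  have hω₂ : 0 < M₂ / (2 * Kdm) / 4 := by positivity
  have hv : 0 < Kθg * Cdc / (2 * Kdg) / 4 := by positivity
  have hP : 0 < Tg / (2 * Kdg * kg) / 4 := by positivity
  filter_upwards [eventually_mul_pow_mul_sq_le 1 hρ₁ zero_lt_one,
    eventually_mul_pow_mul_sq_le 1 hρ₂ zero_lt_one,
    eventually_mul_pow_mul_sq_le 1 hω₁ zero_lt_one,
    eventually_mul_pow_mul_sq_le 1 hω₂ zero_lt_one,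
    eventually_mul_pow_mul_sq_le 1 hv zero_lt_one,
    eventually_mul_pow_mul_sq_le 1 hP zero_lt_one,
    eventually_mul_pow_mul_mul_le_add (-1) hP hω₁ (by norm_num : 0 + 0 < 2 * 4),
    eventually_mul_pow_mul_mul_le_add 1 hρ₁ hω₁ (by norm_num : 0 + 0 < 2 * 6),
    eventually_mul_pow_mul_mul_le_add 1 hv hρ₁ (by norm_num : 0 + 0 < 2 * 6),
    eventually_mul_pow_mul_mul_le_add (-1) hρ₂ hω₂ (by norm_num : 0 + 0 < 2 * 8)]
    with η h₀ h₁ h₂ h₃ h₄ h₅ c₁ c₂ c₃ c₄ y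
  rw [norm_sq_eq_sum_sq_fin_six]
  simp only [lyapunov]
  linarith [h₀ (y 0), h₁ (y 1), h₂ (y 2), h₃ (y 3), h₄ (y 4), h₅ (y 5), c₁ (y 5) (y 2),
    c₂ (y 0) (y 2), c₃ (y 4) (y 0), c₄ (y 1) (y 3),
    (by positivity : 0 ≤ bg / (2 * Kdg) * y 0 ^ 2),
    (by positivity : 0 ≤ bmsc / (2 * Kdm) * y 1 ^ 2),
    (by positivity : 0 ≤ M₁ / (2 * Kdg) * y 2 ^ 2),
    (by positivity : 0 ≤ M₂ / (2 * Kdm) * y 3 ^ 2),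
    (by positivity : 0 ≤ Kθg * Cdc / (2 * Kdg) * y 4 ^ 2),
    (by positivity : 0 ≤ Tg / (2 * Kdg * kg) * y 5 ^ 2)]

theorem eventually_pow_mul_norm_sq_le_dissipation (hbg : 0 < bg) (hbmsc : 0 < bmsc)
    (hM₁ : 0 < M₁) (hCdc : 0 < Cdc) (hTg : 0 < Tg) (hkg : 0 < kg) (hKθg : 0 < Kθg)
    (hKdg : 0 < Kdg) (hKdm : 0 < Kdm) (hκ : 0 ≤ κ) :
    ∀ᶠ η in 𝓝[>] (0 : ℝ), ∀ y,
      η ^ 9 * ‖y‖ ^ 2 ≤ dissipation bg bmsc M₁ M₂ Cdc Tg kg Kθg Kθm Kdg Kdm κ η y := by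
  -- Each indefinite term of `dissipation` is bounded by eighths of the diagonal terms of the
  -- variables it couples; `ρ₂ = y 1` has no diagonal term of its own, and `η ^ 7 * y 1 ^ 2` is
  -- paid for by `(bg * y 0 + bmsc * y 1) ^ 2` and `η ^ 6 * y 0 ^ 2`.
  have hs : 0 < 1 / Cdc / 8 := by positivity
  have hP : 0 < 1 / (Kdg * kg) / 8 := by positivity
  have hω₁ : 0 < kg / Tg / 8 := by positivity
  have hρ₁ : 0 < bg / M₁ / 8 := by positivity
  have hv : 0 < Kθg / 8 := by positivity
  have hω₂ : (0 : ℝ) < 1 / 8 := by norm_num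
  filter_upwards [eventually_pow_mul_sq_le_add (b₁ := bg) hbmsc.ne' hs hρ₁
      (by norm_num : 0 < 7) (by norm_num : 6 < 7),
    eventually_mul_pow_mul_mul_le_add (-(1 / Tg)) hω₁ hP (by norm_num : 4 + 0 < 2 * 4),
    eventually_mul_pow_mul_mul_le_add (bg / M₁) hρ₁ hP (by norm_num : 6 + 0 < 2 * 4),
    eventually_mul_pow_mul_mul_le_add (-(1 / M₁)) hρ₁ hP (by norm_num : 6 + 0 < 2 * 6),
    eventually_mul_pow_mul_mul_le_add (Kdg / Cdc) hω₁ hs (by norm_num : 4 + 0 < 2 * 6),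
    eventually_mul_pow_mul_mul_le_add (1 - Kθg) hv hω₁ (by norm_num : 6 + 4 < 2 * 6),
    eventually_mul_pow_mul_mul_le_add (1 / Cdc) hρ₁ hs (by norm_num : 6 + 0 < 2 * 6),
    eventually_mul_pow_mul_mul_le_add (Kdg / Cdc) hv hs (by norm_num : 6 + 0 < 2 * 6),
    eventually_mul_pow_mul_mul_le_add (-(Kdm / Cdc)) hω₂ hs (by norm_num : 8 + 0 < 2 * 8),
    eventually_mul_pow_mul_mul_le_add Kθm hω₂ hv (by norm_num : 8 + 6 < 2 * 8),
    eventually_mul_pow_mul_mul_le_add (-(κ / M₂)) hω₂ hω₂ (by norm_num : 8 + 7 < 2 * 8),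
    eventually_mul_pow_mul_sq_le (1 / M₁) hP (by norm_num : 0 < 4),
    eventually_mul_pow_mul_sq_le 1 hω₁ (by norm_num : 4 < 6),
    eventually_mul_pow_mul_sq_le (bmsc / M₂) hω₂ (by norm_num : 7 < 8),
    eventually_mul_pow_mul_sq_le 1 hP (by norm_num : 0 < 9),
    eventually_mul_pow_mul_sq_le 1 hω₁ (by norm_num : 4 < 9),
    eventually_mul_pow_mul_sq_le 1 hρ₁ (by norm_num : 6 < 9),
    eventually_mul_pow_mul_sq_le 1 hv (by norm_num : 6 < 9),
    eventually_mul_pow_mul_sq_le 1 hω₂ (by norm_num : 8 < 9),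
    eventually_mul_pow_mul_sq_le 1 hω₂ (by norm_num : 7 < 9), self_mem_nhdsWithin]
    with η hρ₂ c₁ c₂ c₃ c₄ c₅ c₆ c₇ c₈ c₉ c₁₀ d₁ d₂ d₃ m₁ m₂ m₃ m₄ m₅ m₆ (hη : 0 < η) y
  rw [norm_sq_eq_sum_sq_fin_six]
  simp only [dissipation]
  linarith [hρ₂ (y 0) (y 1), c₁ (y 2) (y 5), c₂ (y 0) (y 5), c₃ (y 0) (y 5),
    c₄ (y 2) (bg * y 0 + bmsc * y 1), c₅ (y 4) (y 2), c₆ (y 0) (bg * y 0 + bmsc * y 1),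
    c₇ (y 4) (bg * y 0 + bmsc * y 1), c₈ (y 3) (bg * y 0 + bmsc * y 1), c₉ (y 3) (y 4),
    c₁₀ (y 3) (y 1), d₁ (y 5), d₂ (y 2), d₃ (y 1), m₁ (y 5), m₂ (y 2), m₃ (y 0), m₄ (y 4),
    m₅ (y 3), m₆ (y 1), (by positivity : 0 ≤ 1 / Cdc * (bg * y 0 + bmsc * y 1) ^ 2),
    (by positivity : 0 ≤ 1 / (Kdg * kg) * y 5 ^ 2),
    (by positivity : 0 ≤ η ^ 4 * (kg / Tg * y 2 ^ 2)),
    (by positivity : 0 ≤ η ^ 6 * (bg / M₁ * y 0 ^ 2)),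
    (by positivity : 0 ≤ η ^ 6 * (Kθg * y 4 ^ 2)), (by positivity : 0 ≤ η ^ 8 * y 3 ^ 2),
    (by positivity : 0 ≤ κ / Kdm * y 3 ^ 2), (by positivity : 0 ≤ η ^ 7 * y 1 ^ 2)]

theorem exists_mul_sq_norm_le_mul_exp {Jg Jwt ω0 ωdel : ℝ} (hbg : 0 < bg) (hbmsc : 0 < bmsc)
    (hJg : 0 < Jg) (hJwt : 0 < Jwt) (hω0 : 0 < ω0) (hωdel : 0 < ωdel) (hCdc : 0 < Cdc)
    (hTg : 0 < Tg) (hkg : 0 < kg) (hKθg : 0 < Kθg) (hKdg : 0 < Kdg) (hKdm : 0 < Kdm)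
    (hκ : 0 ≤ κ) (hratio : Kdg * Kθm = Kdm * Kθg) :
    ∃ a c : ℝ, 0 < a ∧ 0 < c ∧
      ∀ x, IsSolution Kdg Kdm Kθg Kθm bg bmsc Jg Jwt ω0 ωdel Cdc Tg kg κ x →
        ∀ t, 0 ≤ t → a * ‖x t‖ ^ 2 ≤ ‖x 0‖ ^ 2 * exp (-(c * t)) := by
  obtain ⟨η, (hη : 0 < η), hQ, hlow, hup⟩ := (eventually_mem_nhdsWithin.and <|
    (eventually_pow_mul_norm_sq_le_dissipation bg bmsc (Jg * ω0) (Jwt * ωdel) Cdc Tg kg Kθg Kθm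
      Kdg Kdm κ hbg hbmsc (by positivity) hCdc hTg hkg hKθg hKdg hKdm hκ).and <|
    (eventually_mul_norm_sq_le_lyapunov bg bmsc (Jg * ω0) (Jwt * ωdel) Cdc Tg kg Kθg Kdg Kdm
      hbg hbmsc (by positivity) (by positivity) hCdc hTg hkg hKθg hKdg hKdm).and
    (eventually_mul_lyapunov_le_norm_sq bg bmsc (Jg * ω0) (Jwt * ωdel) Cdc Tg kg Kθg Kdg
      Kdm)).exists
  set V := lyapunov bg bmsc (Jg * ω0) (Jwt * ωdel) Cdc Tg kg Kθg Kdg Kdm η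
  refine ⟨η ^ 2, η ^ 10, by positivity, by positivity, fun x hx t ht => ?_⟩
  have hdecay : V (x t) ≤ V (x 0) * exp (-η ^ 10 * t) :=
    le_mul_exp_of_hasDerivAt_le (f := fun s => V (x s))
      (fun s hs => hasDerivAt_lyapunov bg bmsc Cdc Tg kg Kθg Kθm Kdg Kdm κ hKdg.ne' hKdm.ne'
        hCdc.ne' hTg.ne' hkg.ne' hJg.ne' hω0.ne' hJwt.ne' hωdel.ne' hratio hx η hs)
      (fun s _ => by
        linarith [hQ (x s), mul_le_mul_of_nonneg_left (hup (x s)) (pow_nonneg hη.le 9)])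
      ht
  calc η ^ 2 * ‖x t‖ ^ 2 = η * (η * ‖x t‖ ^ 2) := by ring
    _ ≤ η * (V (x 0) * exp (-η ^ 10 * t)) :=
      mul_le_mul_of_nonneg_left ((hlow _).trans hdecay) hη.le
    _ ≤ ‖x 0‖ ^ 2 * exp (-(η ^ 10 * t)) := by
      rw [← mul_assoc, neg_mul]; gcongr; exact hup _

end WindTurbineGrid

theorem frequency_and_dc_voltage_stability_general
    (bg bmsc Jg Jwt ω0 ωdel Cdc Tg kg Kθg Kθm Kdg Kdm Kωr Kβ Kp : ℝ)
    (hbg : 0 < bg) (hbmsc : 0 < bmsc) (hJg : 0 < Jg) (hJwt : 0 < Jwt)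
    (hω0 : 0 < ω0) (hωdel : 0 < ωdel) (hCdc : 0 < Cdc) (hTg : 0 < Tg)
    (hkg : 0 < kg) (hKθg : 0 < Kθg)
    (hKdg : 0 < Kdg) (hKdm : 0 < Kdm)
    (hκ : 0 ≤ Kωr + Kβ * Kp)
    (hratio : Kdg / Kθg = Kdm / Kθm) :
    (∀ x : ℝ → EuclideanSpace ℝ (Fin 6),
      IsSolution Kdg Kdm Kθg Kθm bg bmsc Jg Jwt ω0 ωdel Cdc Tg kg
        (Kωr + Kβ * Kp) x →
      Tendsto x atTop (𝓝 0)) ∧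
    (∀ ε : ℝ, 0 < ε → ∃ δ : ℝ, 0 < δ ∧
      ∀ x : ℝ → EuclideanSpace ℝ (Fin 6),
        IsSolution Kdg Kdm Kθg Kθm bg bmsc Jg Jwt ω0 ωdel Cdc Tg kg
          (Kωr + Kβ * Kp) x →
        ‖x 0‖ < δ → ∀ t : ℝ, 0 ≤ t → ‖x t‖ < ε) := by
  have hKθm : Kθm ≠ 0 := by
    rintro rfl
    rw [div_zero] at hratio
    exact (div_pos hKdg hKθg).ne' hratio
  obtain ⟨a, c, ha, hc, hbound⟩ := exists_mul_sq_norm_le_mul_exp bg bmsc Cdc Tg kg Kθg Kθm Kdg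
    Kdm (Kωr + Kβ * Kp) hbg hbmsc hJg hJwt hω0 hωdel hCdc hTg hkg hKθg hKdg hKdm hκ
    ((div_eq_div_iff hKθg.ne' hKθm).mp hratio)
  exact ⟨fun x hx => tendsto_zero_of_mul_sq_norm_le ha hc (hbound x hx),
    fun ε hε => exists_forall_norm_lt_of_mul_sq_norm_le _ ha hc.le hbound hε⟩

/-- **Frequency and DC voltage stability.** If `κ = K_ωr + K_β K_p ≥ 0` and
`K_d^gsc / K_θ^gsc = K_d^msc / K_θ^msc`, then the origin of the linearized
closed-loop system is asymptotically stable: every solution converges to `0`,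
and the origin is Lyapunov stable. -/
theorem frequency_and_dc_voltage_stability
    (bg bmsc Jg Jwt ω0 ωdel Cdc Tg kg Kθg Kθm Kdg Kdm Kωr Kβ Kp : ℝ)
    (hbg : 0 < bg) (hbmsc : 0 < bmsc) (hJg : 0 < Jg) (hJwt : 0 < Jwt)
    (hω0 : 0 < ω0) (hωdel : 0 < ωdel) (hCdc : 0 < Cdc) (hTg : 0 < Tg)
    (hkg : 0 < kg) (hKθg : 0 < Kθg) (hKθm : 0 < Kθm)
    (hKdg : 0 < Kdg) (hKdm : 0 < Kdm)
    (hκ : 0 ≤ Kωr + Kβ * Kp)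
    (hratio : Kdg / Kθg = Kdm / Kθm) :
    (∀ x : ℝ → EuclideanSpace ℝ (Fin 6),
      IsSolution Kdg Kdm Kθg Kθm bg bmsc Jg Jwt ω0 ωdel Cdc Tg kg
        (Kωr + Kβ * Kp) x →
      Tendsto x atTop (𝓝 0)) ∧
    (∀ ε : ℝ, 0 < ε → ∃ δ : ℝ, 0 < δ ∧
      ∀ x : ℝ → EuclideanSpace ℝ (Fin 6),
        IsSolution Kdg Kdm Kθg Kθm bg bmsc Jg Jwt ω0 ωdel Cdc Tg kg
          (Kωr + Kβ * Kp) x →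
        ‖x 0‖ < δ → ∀ t : ℝ, 0 ≤ t → ‖x t‖ < ε) :=
  frequency_and_dc_voltage_stability_general bg bmsc Jg Jwt ω0 ωdel Cdc Tg kg Kθg Kθm Kdg Kdm Kωr Kβ
    Kp hbg hbmsc hJg hJwt hω0 hωdel hCdc hTg hkg hKθg hKdg hKdm hκ hratio
end

section
/- Consider the linearized closed-loop wind-turbine/grid model written as x' = A x, where A is the 6×6 real matrix obtained by dividing each row of the right-hand side by the corresponding positive coefficient (1, 1, J_g ω_0, J_wt ω_del, C_dc, T_g). Assume κ ≥ 0 and the gain-ratio condition K_d^gsc / K_θ^gsc = K_d^msc / K_θ^msc. Then every complex eigenvalue of A has strictly negative real part. -/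
/-!
A diagonal quadratic energy `V(x) = ∑ dᵢ |xᵢ|²` is a Lyapunov function for `A`. The weights `dᵢ`
are chosen so that every skew coupling (ρ–ω, ρ–v, ω₁–P) cancels in `Aᵀ D + D A`; writing the
gain-ratio condition as `K_d^gsc = r K_θ^gsc`, `K_d^msc = r K_θ^msc`, the remaining ρ-block becomes
the rank-one term `-(2 r K_θ^gsc K_θ^msc k_g / C_dc) b bᵀ` with `b = (b_g, b_msc, 0, 0, 0, 0)`.
Hence `Aᵀ D + D A = -Q` with `Q ⪰ 0`, so `Re μ ≤ 0` for every eigenvalue. An eigenvector with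
`Re μ = 0` lies in `ker Q`, i.e. has `P = 0` and `b_g ρ₁ + b_msc ρ₂ = 0`, and back-substitution
through the state equations makes it vanish.
-/

/-- The state matrix `A` of the linearized closed-loop wind-turbine/grid model
`x' = A x` with state `x = (ρ₁, ρ₂, ω₁, ω₂, v, P)`, obtained by dividing each
row of the right-hand side by the corresponding positive coefficient
`(1, 1, J_g ω_0, J_wt ω_del, C_dc, T_g)`. -/
noncomputable def stateMatrix (Kdg Kdm Kθg Kθm bg bmsc Jg Jwt ω0 ωdel Cdc Tg kg κ : ℝ) :
    Matrix (Fin 6) (Fin 6) ℝ :=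
  !![-(Kdg / Cdc) * bg, -(Kdg / Cdc) * bmsc, -1, 0, Kθg, 0;
     -(Kdm / Cdc) * bg, -(Kdm / Cdc) * bmsc, 0, -1, Kθm, 0;
     bg / (Jg * ω0), 0, 0, 0, 0, 1 / (Jg * ω0);
     0, bmsc / (Jwt * ωdel), 0, -κ / (Jwt * ωdel), 0, 0;
     -bg / Cdc, -bmsc / Cdc, 0, 0, 0, 0;
     0, 0, -kg / Tg, 0, 0, -1 / Tg]

open Matrix ComplexConjugate
open scoped ComplexOrder MatrixOrder

namespace Matrix

theorem exists_mulVec_eq_smul_of_mem_spectrum {K n : Type*} [Field K] [Fintype n]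
    [DecidableEq n] {A : Matrix n n K} {μ : K} (hμ : μ ∈ spectrum K A) :
    ∃ v ≠ 0, A *ᵥ v = μ • v := by
  rw [← spectrum_toLin', ← Module.End.hasEigenvalue_iff_mem_spectrum] at hμ
  obtain ⟨v, hv, hv0⟩ := hμ.exists_hasEigenvector
  exact ⟨v, hv0, by simpa using Module.End.mem_eigenspace_iff.mp hv⟩

theorem re_lt_zero_of_lyapunov {𝕜 n : Type*} [RCLike 𝕜] [Fintype n] [DecidableEq n]
    {A P Q : Matrix n n 𝕜} (hP : P.PosDef) (hQ : Q.PosSemidef) (hlyap : Aᴴ * P + P * A = -Q)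
    (hobs : ∀ (μ : 𝕜) v, A *ᵥ v = μ • v → Q *ᵥ v = 0 → v = 0) {μ : 𝕜}
    (hμ : μ ∈ spectrum 𝕜 A) : RCLike.re μ < 0 := by
  obtain ⟨v, hv0, hv⟩ := exists_mulVec_eq_smul_of_mem_spectrum hμ
  obtain ⟨p, hp, hpv⟩ := RCLike.pos_iff_exists_ofReal.mp (hP.dotProduct_mulVec_pos hv0)
  obtain ⟨q, hq, hqv⟩ := RCLike.nonneg_iff_exists_ofReal.mp (hQ.dotProduct_mulVec_nonneg v)
  have hAstar : star v ⬝ᵥ Aᴴ *ᵥ (P *ᵥ v) = conj μ * (star v ⬝ᵥ P *ᵥ v) := by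
    rw [dotProduct_mulVec, vecMul_conjTranspose, star_star, hv, star_smul, smul_dotProduct,
      RCLike.star_def, smul_eq_mul]
  have hA : star v ⬝ᵥ P *ᵥ (A *ᵥ v) = μ * (star v ⬝ᵥ P *ᵥ v) := by
    rw [hv, mulVec_smul, dotProduct_smul, smul_eq_mul]
  have hquad : (μ + conj μ) * (star v ⬝ᵥ P *ᵥ v) = -(star v ⬝ᵥ Q *ᵥ v) := by
    rw [← dotProduct_neg, ← neg_mulVec, ← hlyap, add_mulVec, dotProduct_add, ← mulVec_mulVec,
      ← mulVec_mulVec, hAstar, hA]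
    ring
  rw [RCLike.add_conj, ← hpv, ← hqv] at hquad
  have hquad' : 2 * RCLike.re μ * p = -q := by exact_mod_cast hquad
  by_contra! hre
  have hq0 : star v ⬝ᵥ Q *ᵥ v = 0 := by
    rw [← hqv, RCLike.ofReal_eq_zero]
    nlinarith
  exact hv0 (hobs μ v hv ((hQ.dotProduct_mulVec_zero_iff v).mp hq0))

theorem map_ofReal_mul {n : Type*} [Fintype n] (A B : Matrix n n ℝ) :
    (A * B).map ((↑) : ℝ → ℂ) = A.map (↑) * B.map (↑) :=
  Matrix.map_mul (f := Complex.ofRealHom)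

theorem map_ofReal_transpose {m n : Type*} (A : Matrix m n ℝ) :
    Aᵀ.map ((↑) : ℝ → ℂ) = (A.map (↑))ᴴ := by
  ext
  simp

theorem PosSemidef.map_ofReal {n : Type*} [Fintype n] {M : Matrix n n ℝ} (hM : M.PosSemidef) :
    (M.map ((↑) : ℝ → ℂ)).PosSemidef := by
  classical
  obtain ⟨B, rfl⟩ := CStarAlgebra.nonneg_iff_eq_star_mul_self.mp hM.nonneg
  rw [star_eq_conjTranspose, conjTranspose_eq_transpose_of_trivial, map_ofReal_mul,
    map_ofReal_transpose]
  exact posSemidef_conjTranspose_mul_self _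

theorem PosDef.map_ofReal {n : Type*} [Fintype n] [DecidableEq n] {M : Matrix n n ℝ}
    (hM : M.PosDef) : (M.map ((↑) : ℝ → ℂ)).PosDef :=
  hM.posSemidef.map_ofReal.posDef_iff_isUnit.mpr (hM.isUnit.map Complex.ofRealHom.mapMatrix)

theorem re_lt_zero_of_lyapunov_ofReal {n : Type*} [Fintype n] [DecidableEq n]
    {A P Q : Matrix n n ℝ} (hP : P.PosDef) (hQ : Q.PosSemidef) (hlyap : Aᵀ * P + P * A = -Q)
    (hobs : ∀ (μ : ℂ) v, A.map (↑) *ᵥ v = μ • v → Q.map ((↑) : ℝ → ℂ) *ᵥ v = 0 → v = 0)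
    {μ : ℂ} (hμ : μ ∈ spectrum ℂ (A.map ((↑) : ℝ → ℂ))) : μ.re < 0 := by
  have hlyapℂ : (A.map ((↑) : ℝ → ℂ))ᴴ * P.map (↑) + P.map (↑) * A.map (↑) = -Q.map (↑) := by
    rw [← map_ofReal_transpose, ← map_ofReal_mul, ← map_ofReal_mul, ← Matrix.map_add, hlyap,
      Matrix.map_neg] <;> simp
  simpa using re_lt_zero_of_lyapunov hP.map_ofReal hQ.map_ofReal hlyapℂ hobs hμ

end Matrix

def energyWeights (Kθg Kθm bg bmsc Jg Jwt ω0 ωdel Cdc Tg kg : ℝ) : Fin 6 → ℝ :=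
  ![Kθm * kg * bg, Kθg * kg * bmsc, Kθm * kg * (Jg * ω0), Kθg * kg * (Jwt * ωdel),
    Kθg * Kθm * kg * Cdc, Kθm * Tg]

noncomputable def dissipationMatrix (r Kθg Kθm bg bmsc Cdc kg κ : ℝ) :
    Matrix (Fin 6) (Fin 6) ℝ :=
  (2 * r * Kθg * Kθm * kg / Cdc) • vecMulVec ![bg, bmsc, 0, 0, 0, 0] ![bg, bmsc, 0, 0, 0, 0] +
    diagonal ![0, 0, 0, 2 * Kθg * kg * κ, 0, 2 * Kθm]

theorem posDef_diagonal_energyWeights {Kθg Kθm bg bmsc Jg Jwt ω0 ωdel Cdc Tg kg : ℝ}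
    (hKθg : 0 < Kθg) (hKθm : 0 < Kθm) (hbg : 0 < bg) (hbmsc : 0 < bmsc) (hJg : 0 < Jg)
    (hJwt : 0 < Jwt) (hω0 : 0 < ω0) (hωdel : 0 < ωdel) (hCdc : 0 < Cdc) (hTg : 0 < Tg)
    (hkg : 0 < kg) :
    (diagonal (energyWeights Kθg Kθm bg bmsc Jg Jwt ω0 ωdel Cdc Tg kg)).PosDef :=
  posDef_diagonal_iff.mpr fun i => by fin_cases i <;>
    simp only [energyWeights, Fin.zero_eta, Fin.mk_one, Fin.reduceFinMk, Fin.isValue, cons_val_zero,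
      cons_val_one, cons_val] <;>
    positivity

theorem posSemidef_dissipationMatrix {r Kθg Kθm bg bmsc Cdc kg κ : ℝ} (hr : 0 ≤ r)
    (hKθg : 0 ≤ Kθg) (hKθm : 0 ≤ Kθm) (hCdc : 0 ≤ Cdc) (hkg : 0 ≤ kg) (hκ : 0 ≤ κ) :
    (dissipationMatrix r Kθg Kθm bg bmsc Cdc kg κ).PosSemidef := by
  refine .add (.smul ?_ (by positivity)) (.diagonal fun i => by
    fin_cases i <;>
      simp only [Fin.zero_eta, Fin.mk_one, Fin.reduceFinMk, Fin.isValue, Pi.zero_apply, cons_val_zero,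
        cons_val_one, cons_val] <;>
      positivity)
  simpa using posSemidef_vecMulVec_self_star ![bg, bmsc, 0, 0, 0, 0]

theorem stateMatrix_lyapunov {r Kθg Kθm bg bmsc Jg Jwt ω0 ωdel Cdc Tg kg κ : ℝ}
    (hJg : Jg ≠ 0) (hω0 : ω0 ≠ 0) (hJwt : Jwt ≠ 0) (hωdel : ωdel ≠ 0) (hCdc : Cdc ≠ 0)
    (hTg : Tg ≠ 0) :
    (stateMatrix (r * Kθg) (r * Kθm) Kθg Kθm bg bmsc Jg Jwt ω0 ωdel Cdc Tg kg κ)ᵀ *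
        diagonal (energyWeights Kθg Kθm bg bmsc Jg Jwt ω0 ωdel Cdc Tg kg) +
      diagonal (energyWeights Kθg Kθm bg bmsc Jg Jwt ω0 ωdel Cdc Tg kg) *
        stateMatrix (r * Kθg) (r * Kθm) Kθg Kθm bg bmsc Jg Jwt ω0 ωdel Cdc Tg kg κ =
      -dissipationMatrix r Kθg Kθm bg bmsc Cdc kg κ := by
  ext i j
  fin_cases i <;> fin_cases j <;>
    simp [stateMatrix, energyWeights, dissipationMatrix, mul_apply, Fin.sum_univ_six] <;>
    field_simp <;> ring

theorem stateMatrix_observable {r Kθg Kθm bg bmsc Jg Jwt ω0 ωdel Cdc Tg kg κ : ℝ} (hr : r ≠ 0)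
    (hKθg : Kθg ≠ 0) (hKθm : Kθm ≠ 0) (hbg : bg ≠ 0) (hbmsc : bmsc ≠ 0) (hJg : Jg ≠ 0)
    (hω0 : ω0 ≠ 0) (hCdc : Cdc ≠ 0) (hTg : Tg ≠ 0) (hkg : kg ≠ 0) (μ : ℂ) (v : Fin 6 → ℂ)
    (hA : (stateMatrix (r * Kθg) (r * Kθm) Kθg Kθm bg bmsc Jg Jwt ω0 ωdel Cdc Tg kg κ).map (↑) *ᵥ v
      = μ • v)
    (hQ : (dissipationMatrix r Kθg Kθm bg bmsc Cdc kg κ).map (↑) *ᵥ v = 0) : v = 0 := by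
  have hQ0 := congrFun hQ 0
  have hQ5 := congrFun hQ 5
  have hA0 := congrFun hA 0
  have hA1 := congrFun hA 1
  have hA2 := congrFun hA 2
  have hA5 := congrFun hA 5
  simp only [mulVec, dotProduct, dissipationMatrix, vecMulVec, smul_of, map_apply,
    Matrix.add_apply, of_apply, Pi.smul_apply, smul_eq_mul, Complex.ofReal_mul, Complex.ofReal_div,
    Complex.ofReal_ofNat, Fin.sum_univ_six, diagonal_apply_eq, Complex.ofReal_zero, add_zero,
    ne_eq, not_false_eq_true, diagonal_apply_ne, cons_val, mul_zero, Fin.reduceEq, zero_mul,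
    Pi.zero_apply, zero_add, mul_eq_zero, OfNat.ofNat_ne_zero, Complex.ofReal_eq_zero, false_or,
    stateMatrix, Complex.ofReal_neg, Complex.ofReal_one]
    at hQ0 hQ5 hA0 hA1 hA2 hA5
  have hP : v 5 = 0 := hQ5.resolve_left hKθm
  have hS : (bg : ℂ) * v 0 + bmsc * v 1 = 0 := by
    have h : (2 * r * Kθg * Kθm * kg / Cdc * bg : ℂ) * (bg * v 0 + bmsc * v 1) = 0 := by
      linear_combination hQ0
    simpa [hr, hKθg, hKθm, hkg, hCdc, hbg] using h
  have hω₁ : v 2 = 0 := by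
    have h : (kg / Tg : ℂ) * v 2 = 0 := by linear_combination -hA5 - (μ + 1 / Tg) * hP
    simpa [hkg, hTg] using h
  have hρ₁ : v 0 = 0 := by
    have h : (bg / (Jg * ω0) : ℂ) * v 0 = 0 := by
      linear_combination hA2 + μ * hω₁ - (ω0 : ℂ)⁻¹ * (Jg : ℂ)⁻¹ * hP
    simpa [hbg, hJg, hω0] using h
  have hρ₂ : v 1 = 0 := by
    have h : (bmsc : ℂ) * v 1 = 0 := by linear_combination hS - bg * hρ₁
    simpa [hbmsc] using h
  have hv : v 4 = 0 := by
    have h : (Kθg : ℂ) * v 4 = 0 := by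
      linear_combination hA0 + (r * Kθg / Cdc) * hS + μ * hρ₁ + hω₁
    simpa [hKθg] using h
  have hω₂ : v 3 = 0 := by
    linear_combination -hA1 - (r * Kθm / Cdc) * hS - μ * hρ₂ + Kθm * hv
  ext i
  fin_cases i <;> assumption

theorem state_matrix_is_hurwitz_general
    (bg bmsc Jg Jwt ω0 ωdel Cdc Tg kg Kθg Kθm Kdg Kdm Kωr Kβ Kp : ℝ)
    (hbg : 0 < bg) (hbmsc : 0 < bmsc) (hJg : 0 < Jg) (hJwt : 0 < Jwt)
    (hω0 : 0 < ω0) (hωdel : 0 < ωdel) (hCdc : 0 < Cdc) (hTg : 0 < Tg)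
    (hkg : 0 < kg) (hKθg : 0 < Kθg) (hKθm : 0 < Kθm)
    (hKdg : 0 < Kdg)
    (hκ : 0 ≤ Kωr + Kβ * Kp)
    (hratio : Kdg / Kθg = Kdm / Kθm) :
    ∀ μ : ℂ,
      μ ∈ spectrum ℂ
        ((stateMatrix Kdg Kdm Kθg Kθm bg bmsc Jg Jwt ω0 ωdel Cdc Tg kg
            (Kωr + Kβ * Kp)).map (Complex.ofReal ·)) →
      μ.re < 0 := by
  intro μ hμ
  obtain ⟨r, rfl, rfl⟩ : ∃ r, Kdg = r * Kθg ∧ Kdm = r * Kθm :=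
    ⟨Kdg / Kθg, by field_simp, by rw [hratio]; field_simp⟩
  have hr : 0 < r := pos_of_mul_pos_left hKdg hKθg.le
  exact re_lt_zero_of_lyapunov_ofReal
    (posDef_diagonal_energyWeights hKθg hKθm hbg hbmsc hJg hJwt hω0 hωdel hCdc hTg hkg)
    (posSemidef_dissipationMatrix hr.le hKθg.le hKθm.le hCdc.le hkg.le hκ)
    (stateMatrix_lyapunov hJg.ne' hω0.ne' hJwt.ne' hωdel.ne' hCdc.ne' hTg.ne')
    (stateMatrix_observable hr.ne' hKθg.ne' hKθm.ne' hbg.ne' hbmsc.ne' hJg.ne' hω0.ne' hCdc.ne'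
      hTg.ne' hkg.ne')
    hμ

/-- **Hurwitz stability of the linearized model.** If `κ = K_ωr + K_β K_p ≥ 0`
and `K_d^gsc / K_θ^gsc = K_d^msc / K_θ^msc`, then every complex eigenvalue of
the state matrix `A` has strictly negative real part. -/
theorem state_matrix_is_hurwitz
    (bg bmsc Jg Jwt ω0 ωdel Cdc Tg kg Kθg Kθm Kdg Kdm Kωr Kβ Kp : ℝ)
    (hbg : 0 < bg) (hbmsc : 0 < bmsc) (hJg : 0 < Jg) (hJwt : 0 < Jwt)
    (hω0 : 0 < ω0) (hωdel : 0 < ωdel) (hCdc : 0 < Cdc) (hTg : 0 < Tg)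
    (hkg : 0 < kg) (hKθg : 0 < Kθg) (hKθm : 0 < Kθm)
    (hKdg : 0 < Kdg) (hKdm : 0 < Kdm)
    (hκ : 0 ≤ Kωr + Kβ * Kp)
    (hratio : Kdg / Kθg = Kdm / Kθm) :
    ∀ μ : ℂ,
      μ ∈ spectrum ℂ
        ((stateMatrix Kdg Kdm Kθg Kθm bg bmsc Jg Jwt ω0 ωdel Cdc Tg kg
            (Kωr + Kβ * Kp)).map (Complex.ofReal ·)) →
      μ.re < 0 :=
  state_matrix_is_hurwitz_general bg bmsc Jg Jwt ω0 ωdel Cdc Tg kg Kθg Kθm Kdg Kdm Kωr Kβ Kp hbg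
    hbmsc hJg hJwt hω0 hωdel hCdc hTg hkg hKθg hKθm hKdg hκ hratio
end

section
/- Assume κ ≥ 0. If a solution x(t) = (ρ₁, ρ₂, ω₁, ω₂, v, P)(t) of the linearized closed-loop wind-turbine/grid model satisfies, for all t ≥ 0, b_g ρ₁(t) + b_msc ρ₂(t) = 0, κ ω₂(t) = 0, and P(t) = 0 (i.e., the trajectory remains in the set where the LaSalle dissipation vanishes), then x(t) = 0 for all t ≥ 0. In other words, the maximal invariant set contained in { x : b_g ρ₁ + b_msc ρ₂ = 0, κ ω₂ = 0, P = 0 } is the origin. -/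

private lemma deriv_zero_of_pos_zero {f : ℝ → ℝ} {t d : ℝ}
    (hd : HasDerivAt f d t) (hz : ∀ s : ℝ, 0 < s → f s = 0) (ht : 0 < t) :
    d = 0 := by
  have heq : f =ᶠ[nhds t] fun _ => (0 : ℝ) := by
    filter_upwards [Ioi_mem_nhds ht] with s hs using hz s hs
  have h0 : HasDerivAt f 0 t :=
    (hasDerivAt_const t (0 : ℝ)).congr_of_eventuallyEq heq
  exact hd.unique h0

private lemma zero_at_zero {f : ℝ → ℝ} (hc : ContinuousAt f 0)
    (hz : ∀ s : ℝ, 0 < s → f s = 0) : f 0 = 0 := by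
  have h1 : Filter.Tendsto f (nhdsWithin 0 (Set.Ioi 0)) (nhds (f 0)) :=
    hc.tendsto.mono_left nhdsWithin_le_nhds
  have h2 : Filter.Tendsto f (nhdsWithin 0 (Set.Ioi 0)) (nhds 0) := by
    refine Filter.Tendsto.congr' ?_ tendsto_const_nhds
    filter_upwards [self_mem_nhdsWithin] with s hs using (hz s hs).symm
  exact tendsto_nhds_unique h1 h2

/-- **Invariance: only the origin stays in the zero-dissipation set.**
If `κ ≥ 0` and a solution satisfies `b_g ρ₁(t) + b_msc ρ₂(t) = 0`,
`κ ω₂(t) = 0` and `P(t) = 0` for all `t ≥ 0`, then it is identically zero. -/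
theorem invariant_set_is_origin
    (bg bmsc Jg Jwt ω0 ωdel Cdc Tg kg Kθg Kθm Kdg Kdm Kωr Kβ Kp : ℝ)
    (hbg : 0 < bg) (hbmsc : 0 < bmsc) (hJg : 0 < Jg) (hJwt : 0 < Jwt)
    (hω0 : 0 < ω0) (hωdel : 0 < ωdel) (hCdc : 0 < Cdc) (hTg : 0 < Tg)
    (hkg : 0 < kg) (hKθg : 0 < Kθg) (hKθm : 0 < Kθm)
    (hKdg : 0 < Kdg) (hKdm : 0 < Kdm)
    (hκ : 0 ≤ Kωr + Kβ * Kp)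
    (x : ℝ → EuclideanSpace ℝ (Fin 6))
    (hx : IsSolution Kdg Kdm Kθg Kθm bg bmsc Jg Jwt ω0 ωdel Cdc Tg kg
      (Kωr + Kβ * Kp) x)
    (hρ : ∀ t : ℝ, 0 ≤ t → bg * x t 0 + bmsc * x t 1 = 0)
    (hω : ∀ t : ℝ, 0 ≤ t → (Kωr + Kβ * Kp) * x t 3 = 0)
    (hP : ∀ t : ℝ, 0 ≤ t → x t 5 = 0) :
    ∀ t : ℝ, 0 ≤ t → x t = 0 := by
  -- abbreviation
  set κ := Kωr + Kβ * Kp with hκdef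
  -- Step 1: ω₁ = 0 for t > 0
  have hω1 : ∀ t : ℝ, 0 < t → x t 2 = 0 := by
    intro t ht
    have hd := (hx t ht.le).2.2.2.2.2
    have h0 := deriv_zero_of_pos_zero hd (fun s hs => hP s hs.le) ht
    have hP0 := hP t ht.le
    rcases div_eq_zero_iff.mp h0 with h | h
    · rw [hP0] at h
      have : kg * x t 2 = 0 := by linarith
      rcases mul_eq_zero.mp this with h' | h'
      · exact absurd h' (ne_of_gt hkg)
      · exact h'
    · exact absurd h (ne_of_gt hTg)
  -- Step 2: ρ₁ = 0 for t > 0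
  have hρ1 : ∀ t : ℝ, 0 < t → x t 0 = 0 := by
    intro t ht
    have hd := (hx t ht.le).2.2.1
    have h0 := deriv_zero_of_pos_zero hd hω1 ht
    have hP0 := hP t ht.le
    rw [hP0] at h0
    have hden : Jg * ω0 ≠ 0 := by positivity
    rcases div_eq_zero_iff.mp h0 with h | h
    · have : bg * x t 0 = 0 := by linarith
      rcases mul_eq_zero.mp this with h' | h'
      · exact absurd h' (ne_of_gt hbg)
      · exact h'
    · exact absurd h hden
  -- Step 3: ρ₂ = 0 for t > 0
  have hρ2 : ∀ t : ℝ, 0 < t → x t 1 = 0 := by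
    intro t ht
    have h := hρ t ht.le
    rw [hρ1 t ht] at h
    have : bmsc * x t 1 = 0 := by linarith
    rcases mul_eq_zero.mp this with h | h
    · exact absurd h (ne_of_gt hbmsc)
    · exact h
  -- Step 4: v = 0 for t > 0
  have hv : ∀ t : ℝ, 0 < t → x t 4 = 0 := by
    intro t ht
    have hd := (hx t ht.le).1
    have h0 := deriv_zero_of_pos_zero hd hρ1 ht
    rw [hρ t ht.le, hω1 t ht] at h0
    have : Kθg * x t 4 = 0 := by linarith
    rcases mul_eq_zero.mp this with h | h
    · exact absurd h (ne_of_gt hKθg)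
    · exact h
  -- Step 5: ω₂ = 0 for t > 0
  have hω2 : ∀ t : ℝ, 0 < t → x t 3 = 0 := by
    intro t ht
    have hd := (hx t ht.le).2.1
    have h0 := deriv_zero_of_pos_zero hd hρ2 ht
    rw [hρ t ht.le, hv t ht] at h0
    have : x t 3 = 0 := by linarith
    exact this
  -- Combine: zero on positives for each coordinate, and at 0 by continuity
  have key : ∀ i : Fin 6, ∀ t : ℝ, 0 ≤ t → x t i = 0 := by
    intro i
    have hzi : ∀ s : ℝ, 0 < s → x s i = 0 := by
      intro s hs
      fin_cases i
      · exact hρ1 s hs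
      · exact hρ2 s hs
      · exact hω1 s hs
      · exact hω2 s hs
      · exact hv s hs
      · exact hP s hs.le
    intro t ht
    rcases ht.lt_or_eq with h | h
    · exact hzi t h
    · subst h
      have hc : ContinuousAt (fun s => x s i) 0 := by
        have h0 := hx 0 le_rfl
        fin_cases i
        · exact h0.1.continuousAt
        · exact h0.2.1.continuousAt
        · exact h0.2.2.1.continuousAt
        · exact h0.2.2.2.1.continuousAt
        · exact h0.2.2.2.2.1.continuousAt
        · exact h0.2.2.2.2.2.continuousAt
      exact zero_at_zero hc hzi
  intro t ht
  ext i
  simpa using key i t ht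
end

section
/- Steady-state rotor-speed constraint: let K_θ^gsc > 0, K_θ^msc > 0, Δω_max > 0, and ω_del ≥ ω_mpp, and assume the gain-ratio bound K_θ^msc / K_θ^gsc ≤ (ω_del − ω_mpp) / Δω_max. Then for every grid frequency deviation satisfying |ω_g − ω_0| ≤ Δω_max, the steady-state rotor speed ω_r = ω_del + (K_θ^msc / K_θ^gsc)(ω_g − ω_0) satisfies ω_r ≥ ω_mpp. -/
/-- **Steady-state rotor-speed constraint.** If the gain ratio satisfies
`K_θ^msc / K_θ^gsc ≤ (ω_del − ω_mpp) / Δω_max`, then for every grid frequency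
deviation with `|ω_g − ω_0| ≤ Δω_max` the steady-state rotor speed
`ω_r = ω_del + (K_θ^msc / K_θ^gsc)(ω_g − ω_0)` stays above `ω_mpp`. -/
theorem steady_state_rotor_speed_constraint
    (Kθg Kθm Δωmax ωdel ωmpp : ℝ)
    (hKθg : 0 < Kθg) (hKθm : 0 < Kθm) (hΔω : 0 < Δωmax)
    (hdel : ωmpp ≤ ωdel)
    (hgain : Kθm / Kθg ≤ (ωdel - ωmpp) / Δωmax) :
    ∀ ωg ω0 : ℝ, |ωg - ω0| ≤ Δωmax →
      ωmpp ≤ ωdel + (Kθm / Kθg) * (ωg - ω0) := by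
  intro ωg ω0 habs
  have h1 : -(Δωmax) ≤ ωg - ω0 := (abs_le.mp habs).1
  have hr : 0 < Kθm / Kθg := div_pos hKθm hKθg
  have h2 : (Kθm / Kθg) * Δωmax ≤ ωdel - ωmpp := by
    rw [div_le_div_iff₀ hKθg hΔω] at hgain
    rw [div_mul_eq_mul_div, div_le_iff₀ hKθg]
    exact hgain
  nlinarith [mul_le_mul_of_nonneg_left h1 hr.le]
end
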